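/- If the strata are the preimages under the Hilbert curve map of q consecutive subintervals of [0,1] of length 1/q each, then by the Hölder property of the Hilbert curve each stratum has diameter at most 2√(d+3)·q^{−1/d}, and consequently the stratified estimator of ∫ g f_X for an M-Lipschitz g with equal stratum weights w_j = 1/q has variance at most 4(d+3)M²·q^{−1−2/d}. -/

import Mathlib

/-!
Each stratum is the image under a `1/d`-Hölder map of an interval of length `1/q`, so its
diameter is at most `2√(d+3) q^(-1/d)`. On a stratum the `M`-Lipschitz `g` therefore oscillates
by at most `M` times that, which bounds the variance of each sample by Popoviciu's inequality;
the samples are independent, so the mean of `q` of them has `1/q` of that variance.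
-/

open MeasureTheory Set ProbabilityTheory
open scoped NNReal

theorem HolderOnWith.of_dist_le {X Y : Type*} [PseudoMetricSpace X] [PseudoMetricSpace Y]
    {C r : ℝ≥0} {f : X → Y} {s : Set X}
    (h : ∀ x ∈ s, ∀ y ∈ s, dist (f x) (f y) ≤ C * dist x y ^ (r : ℝ)) :
    HolderOnWith C r f s := by
  intro x hx y hy
  rw [edist_nndist, edist_nndist, ← ENNReal.coe_rpow_of_nonneg _ r.coe_nonneg,
    ← ENNReal.coe_mul, ENNReal.coe_le_coe, ← NNReal.coe_le_coe]
  exact_mod_cast h x hx y hy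

theorem HolderOnWith.diam_image_le {X Y : Type*} [PseudoMetricSpace X] [PseudoMetricSpace Y]
    {C r : ℝ≥0} {f : X → Y} {s : Set X} (hf : HolderOnWith C r f s)
    (hs : Bornology.IsBounded s) :
    Metric.diam (f '' s) ≤ C * Metric.diam s ^ (r : ℝ) := by
  refine Metric.diam_le_of_forall_dist_le (by positivity) ?_
  rintro _ ⟨x, hx, rfl⟩ _ ⟨y, hy, rfl⟩
  exact hf.dist_le_of_le hx hy (Metric.dist_le_diam_of_mem hs hx hy)

theorem exists_ae_mem_Icc_of_abs_sub_le {Ω : Type*} [MeasurableSpace Ω] {ν : Measure Ω}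
    [NeZero ν] {X : Ω → ℝ} {s : Set Ω} {ε : ℝ} (hs : ∀ᵐ ω ∂ν, ω ∈ s)
    (hX : ∀ x ∈ s, ∀ y ∈ s, |X x - X y| ≤ ε) :
    ∃ c, ∀ᵐ ω ∂ν, X ω ∈ Icc (c - ε) (c + ε) := by
  obtain ⟨x₀, hx₀⟩ := hs.exists
  refine ⟨X x₀, hs.mono fun x hx => ?_⟩
  have := abs_le.1 (hX x hx x₀ hx₀)
  constructor <;> linarith [this.1, this.2]

theorem variance_mean_pi_le {ι : Type*} [Fintype ι] {Ω : ι → Type*}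
    {mΩ : ∀ i, MeasurableSpace (Ω i)} {P : (i : ι) → Measure (Ω i)}
    [∀ i, IsProbabilityMeasure (P i)] {X : ∀ i, Ω i → ℝ} (hX : ∀ i, MemLp (X i) 2 (P i))
    {v : ℝ} (hv : ∀ i, Var[X i; P i] ≤ v) :
    Var[fun ω => (1 / Fintype.card ι : ℝ) * ∑ i, X i (ω i); Measure.pi P]
      ≤ v / Fintype.card ι := by
  have hsum : (fun ω : ∀ i, Ω i => ∑ i, X i (ω i)) = ∑ i, fun ω => X i (ω i) := by
    ext ω; simp
  rw [variance_const_mul, hsum, variance_sum_pi hX]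
  rcases (Fintype.card ι).eq_zero_or_pos with hn | hn
  · simp [hn]
  calc (1 / Fintype.card ι : ℝ) ^ 2 * ∑ i, Var[X i; P i]
      ≤ (1 / Fintype.card ι : ℝ) ^ 2 * (Fintype.card ι * v) := by
        gcongr
        exact (Finset.sum_le_sum fun i _ => hv i).trans_eq
          (by rw [Finset.sum_const, nsmul_eq_mul, Finset.card_univ])
    _ = v / Fintype.card ι := by field_simp

theorem variance_mean_pi_le_of_abs_sub_le {ι : Type*} [Fintype ι] {Ω : ι → Type*}
    {mΩ : ∀ i, MeasurableSpace (Ω i)} {P : (i : ι) → Measure (Ω i)}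
    [∀ i, IsProbabilityMeasure (P i)] {X : ∀ i, Ω i → ℝ} {s : ∀ i, Set (Ω i)} {ε : ℝ}
    (hXm : ∀ i, AEMeasurable (X i) (P i)) (hs : ∀ i, ∀ᵐ ω ∂P i, ω ∈ s i)
    (hX : ∀ i, ∀ x ∈ s i, ∀ y ∈ s i, |X i x - X i y| ≤ ε) :
    Var[fun ω => (1 / Fintype.card ι : ℝ) * ∑ i, X i (ω i); Measure.pi P]
      ≤ ε ^ 2 / Fintype.card ι := by
  choose c hc using fun i => exists_ae_mem_Icc_of_abs_sub_le (hs i) (hX i)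
  exact variance_mean_pi_le (fun i => memLp_of_bounded (hc i) (hXm i).aestronglyMeasurable 2)
    fun i => (variance_le_sq_of_bounded (hc i) (hXm i)).trans_eq (by ring)

theorem Icc_natCast_div_subset_Icc_zero_one {q : ℕ} (j : Fin q) :
    Icc ((j : ℝ) / q) (((j : ℝ) + 1) / q) ⊆ Icc 0 1 :=
  Icc_subset_Icc (by positivity) (div_le_one_of_le₀ (by exact_mod_cast j.isLt) (by positivity))

theorem HolderOnWith.diam_image_Icc_natCast_div_le {Y : Type*} [PseudoMetricSpace Y]
    {C r : ℝ≥0} {f : ℝ → Y} (hf : HolderOnWith C r f (Icc 0 1)) {q : ℕ} (j : Fin q) :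
    Metric.diam (f '' Icc ((j : ℝ) / q) (((j : ℝ) + 1) / q))
      ≤ C * (q : ℝ) ^ (-(r : ℝ)) := by
  have hq : (0 : ℝ) < q := by exact_mod_cast j.pos
  have hlen : ((j : ℝ) + 1) / q - j / q = (q : ℝ)⁻¹ := by field_simp; ring
  refine ((hf.mono (Icc_natCast_div_subset_Icc_zero_one j)).diam_image_le
    (Metric.isBounded_Icc _ _)).trans_eq ?_
  rw [Real.diam_Icc (by gcongr; linarith), hlen, Real.inv_rpow hq.le, Real.rpow_neg hq.le]

theorem hilbert_strata_diam_and_variance_general (d q : ℕ) (hd : 1 ≤ d) (hq : 1 ≤ q)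
    (H : ℝ → EuclideanSpace ℝ (Fin d))
    (hH : ∀ x ∈ Icc (0:ℝ) 1, ∀ y ∈ Icc (0:ℝ) 1,
      ‖H x - H y‖ ≤ 2 * Real.sqrt ((d : ℝ) + 3) * |x - y| ^ ((1:ℝ) / d))
    (A : Fin q → Set (EuclideanSpace ℝ (Fin d)))
    (hA : ∀ j, A j = H '' Icc ((j : ℝ) / q) (((j : ℝ) + 1) / q))
    (μ : Measure (EuclideanSpace ℝ (Fin d)))
    (P : Fin q → Measure (EuclideanSpace ℝ (Fin d))) [∀ j, IsProbabilityMeasure (P j)]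
    (hP : ∀ j, P j = (μ (A j))⁻¹ • μ.restrict (A j))
    (M : ℝ) (hM : 0 ≤ M)
    (g : EuclideanSpace ℝ (Fin d) → ℝ)
    (hg : ∀ x y, |g x - g y| ≤ M * ‖x - y‖) :
    (∀ j, Metric.diam (A j) ≤ 2 * Real.sqrt ((d : ℝ) + 3) * (q : ℝ) ^ (-(1:ℝ) / d)) ∧
    (∫ xs, ((1 / (q:ℝ)) * ∑ j : Fin q, g (xs j)
        - ∫ ys, (1 / (q:ℝ)) * ∑ j : Fin q, g (ys j) ∂(Measure.pi P)) ^ 2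
      ∂(Measure.pi P)
      ≤ 4 * ((d : ℝ) + 3) * M ^ 2 * (q : ℝ) ^ (-1 - 2 / (d : ℝ))) := by
  have hq₀ : (0 : ℝ) < q := by exact_mod_cast hq
  set D := 2 * Real.sqrt ((d : ℝ) + 3) * (q : ℝ) ^ (-(1:ℝ) / d)
  have hHolder : HolderOnWith ⟨2 * Real.sqrt ((d : ℝ) + 3), by positivity⟩
      ⟨1 / d, by positivity⟩ H (Icc 0 1) :=
    .of_dist_le fun x hx y hy => by rw [dist_eq_norm, Real.dist_eq]; exact hH x hx y hy
  have hdiam : ∀ j, Metric.diam (A j) ≤ D := fun j => by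
    have hD : D = 2 * Real.sqrt ((d : ℝ) + 3) * (q : ℝ) ^ (-(1 / d : ℝ)) := by
      rw [← neg_div]
    rw [hA j, hD]
    exact hHolder.diam_image_Icc_natCast_div_le j
  refine ⟨hdiam, ?_⟩
  have hcompact : ∀ j, IsCompact (A j) := fun j => hA j ▸ isCompact_Icc.image_of_continuousOn
    ((hHolder.continuousOn (NNReal.coe_pos.1 (by positivity : (0 : ℝ) < 1 / d))).mono
      (Icc_natCast_div_subset_Icc_zero_one j))
  have hosc : ∀ j, ∀ x ∈ A j, ∀ y ∈ A j, |g x - g y| ≤ M * D := fun j x hx y hy =>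
    (hg x y).trans <| mul_le_mul_of_nonneg_left (dist_eq_norm x y ▸
      (Metric.dist_le_diam_of_mem (hcompact j).isBounded hx hy).trans (hdiam j)) hM
  have hgm : Measurable g := (LipschitzWith.of_dist_le' fun x y => by
    rw [Real.dist_eq, dist_eq_norm]; exact hg x y).continuous.measurable
  have hmean : Measurable fun xs : Fin q → EuclideanSpace ℝ (Fin d) =>
      1 / (q : ℝ) * ∑ j, g (xs j) :=
    (Finset.measurable_sum _ fun j _ => hgm.comp (measurable_pi_apply j)).const_mul _
  have hexp : (M * D) ^ 2 / q = 4 * ((d : ℝ) + 3) * M ^ 2 * (q : ℝ) ^ (-1 - 2 / (d : ℝ)) := by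
    have hpow : ((q : ℝ) ^ (-(1:ℝ) / d)) ^ 2 / q = (q : ℝ) ^ (-1 - 2 / (d : ℝ)) := by
      rw [← Real.rpow_natCast, ← Real.rpow_mul hq₀.le, ← Real.rpow_sub_one hq₀.ne']
      ring_nf
    rw [← hpow, mul_pow, mul_pow, mul_pow, Real.sq_sqrt (by positivity)]
    ring
  rw [← variance_eq_integral hmean.aemeasurable]
  simpa [hexp] using variance_mean_pi_le_of_abs_sub_le (X := fun _ => g)
    (fun _ => hgm.aemeasurable)
    (fun j => hP j ▸ Measure.ae_smul_measure (ae_restrict_mem (hcompact j).measurableSet) _) hosc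

/-- Hilbert-curve strata: if the strata are images under the Hilbert curve `H` (satisfying
the Hölder bound with constant `2√(d+3)`) of `q` consecutive subintervals of `[0,1]` of
length `1/q`, each of `f_X`-probability `1/q`, then each stratum has diameter at most
`2√(d+3) q^(-1/d)`, and the stratified estimator `(1/q) ∑ j g(x_j*)` of `∫ g f_X` for an
`M`-Lipschitz `g` has variance at most `4(d+3) M² q^(-1-2/d)`. -/
theorem hilbert_strata_diam_and_variance (d q : ℕ) (hd : 1 ≤ d) (hq : 1 ≤ q)
    (H : ℝ → EuclideanSpace ℝ (Fin d))
    (hH : ∀ x ∈ Icc (0:ℝ) 1, ∀ y ∈ Icc (0:ℝ) 1,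
      ‖H x - H y‖ ≤ 2 * Real.sqrt ((d : ℝ) + 3) * |x - y| ^ ((1:ℝ) / d))
    (A : Fin q → Set (EuclideanSpace ℝ (Fin d)))
    (hA : ∀ j, A j = H '' Icc ((j : ℝ) / q) (((j : ℝ) + 1) / q))
    (μ : Measure (EuclideanSpace ℝ (Fin d))) [IsProbabilityMeasure μ]
    (hprob : ∀ j, μ (A j) = (q : ENNReal)⁻¹)
    (P : Fin q → Measure (EuclideanSpace ℝ (Fin d))) [∀ j, IsProbabilityMeasure (P j)]
    (hP : ∀ j, P j = (μ (A j))⁻¹ • μ.restrict (A j))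
    (M : ℝ) (hM : 0 ≤ M)
    (g : EuclideanSpace ℝ (Fin d) → ℝ)
    (hg : ∀ x y, |g x - g y| ≤ M * ‖x - y‖) :
    (∀ j, Metric.diam (A j) ≤ 2 * Real.sqrt ((d : ℝ) + 3) * (q : ℝ) ^ (-(1:ℝ) / d)) ∧
    (∫ xs, ((1 / (q:ℝ)) * ∑ j : Fin q, g (xs j)
        - ∫ ys, (1 / (q:ℝ)) * ∑ j : Fin q, g (ys j) ∂(Measure.pi P)) ^ 2
      ∂(Measure.pi P)
      ≤ 4 * ((d : ℝ) + 3) * M ^ 2 * (q : ℝ) ^ (-1 - 2 / (d : ℝ))) :=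
  hilbert_strata_diam_and_variance_general d q hd hq H hH A hA μ P hP M hM g hg
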